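/- arXiv:1401.6757 — 6 statements merged into one kernel-verified Lean document; each statement's English description precedes it below -/
import Mathlib

section
/- Let S be a nonempty compact set of real n×n matrices, let A₁, A₂ be real n×n matrices, and let ε > 0. Then exactly one of the following two statements holds: (1) there exists a matrix X in the convex hull of S such that A₁ • X ≥ ε and A₂ • X ≥ ε; (2) there exists p ∈ [0,1] such that (p·A₁ + (1−p)·A₂) • X < ε for every X ∈ S. -/
/-!
Send a matrix `X` to the point `(A₁ • X, A₂ • X)` of the plane. This linear map carries `conv S`
onto the convex hull of the compact image `K` of `S`, which is compact by Carathéodory's theorem.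
If that hull misses the closed quadrant `[ε, ∞)²`, a strictly separating line has a normal `(a, b)`
with `a, b ≥ 0` (the quadrant is unbounded in both positive directions) and `a + b > 0`
(a zero functional separates nothing), and `p = a / (a + b)` works. Conversely, every weighted average
`p y₁ + (1 - p) y₂` is `≥ ε` on the quadrant but `< ε` on the convex hull of `K`.
-/

open Matrix BigOperators

noncomputable def frob {m : Type*} [Fintype m] (A X : Matrix m m ℝ) : ℝ :=
  (Aᵀ * X).trace

section CompactHull

variable {E : Type*} [AddCommGroup E] [Module ℝ E] [FiniteDimensional ℝ E] {s : Set E}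

theorem exists_stdSimplex_sum_eq_of_mem_convexHull {x : E} (hx : x ∈ convexHull ℝ s) :
    ∃ w ∈ stdSimplex ℝ (Fin (Module.finrank ℝ E + 1)),
      ∃ z ∈ Set.univ.pi fun _ => s, ∑ i, w i • z i = x := by
  classical
  obtain ⟨s₀, hs₀⟩ := (convexHull_nonempty_iff (𝕜 := ℝ)).mp ⟨x, hx⟩
  obtain ⟨ι, _, z, w, hzs, hz, hw0, hw1, rfl⟩ := eq_pos_convex_span_of_mem_convexHull hx
  have hcard : Fintype.card ι ≤ Fintype.card (Fin (Module.finrank ℝ E + 1)) := by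
    simpa using hz.card_le_finrank_succ.trans (Nat.succ_le_succ (Submodule.finrank_le _))
  obtain ⟨e⟩ := Function.Embedding.nonempty_of_card_le hcard
  set W := Function.extend e w 0
  set Z := Function.extend e z fun _ => s₀
  have hW (i : ι) : W (e i) = w i := e.injective.extend_apply _ _ _
  have hZ (i : ι) : Z (e i) = z i := e.injective.extend_apply _ _ _
  have hWout (j) (hj : j ∉ Set.range e) : W j = 0 := Function.extend_apply' _ _ _ hj
  have hZout (j) (hj : j ∉ Set.range e) : Z j = s₀ := Function.extend_apply' _ _ _ hj
  refine ⟨W, ⟨fun j => ?_, ?_⟩, Z, fun j _ => ?_, ?_⟩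
  · by_cases hj : j ∈ Set.range e
    · obtain ⟨i, rfl⟩ := hj
      exact hW i ▸ (hw0 i).le
    · exact (hWout j hj).ge
  · rw [← hw1]
    exact (Fintype.sum_of_injective e e.injective _ _ hWout fun i => (hW i).symm).symm
  · by_cases hj : j ∈ Set.range e
    · obtain ⟨i, rfl⟩ := hj
      exact hZ i ▸ hzs (Set.mem_range_self i)
    · exact hZout j hj ▸ hs₀
  · refine (Fintype.sum_of_injective e e.injective _ _ (fun j hj => ?_) fun i => ?_).symm
    · rw [hWout j hj, zero_smul]
    · rw [hW, hZ]

variable [TopologicalSpace E] [IsTopologicalAddGroup E] [ContinuousSMul ℝ E]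

theorem IsCompact.convexHull_of_finiteDimensional (hs : IsCompact s) :
    IsCompact (convexHull ℝ s) := by
  set d := Module.finrank ℝ E + 1
  have hsum : Continuous fun wz : (Fin d → ℝ) × (Fin d → E) => ∑ i, wz.1 i • wz.2 i := by
    fun_prop
  have hhull : convexHull ℝ s = (fun wz : (Fin d → ℝ) × (Fin d → E) => ∑ i, wz.1 i • wz.2 i) ''
      (stdSimplex ℝ (Fin d) ×ˢ Set.univ.pi fun _ => s) := by
    refine subset_antisymm (fun x hx => ?_) ?_
    · obtain ⟨w, hw, z, hz, rfl⟩ := exists_stdSimplex_sum_eq_of_mem_convexHull hx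
      exact ⟨(w, z), ⟨hw, hz⟩, rfl⟩
    · rintro _ ⟨⟨w, z⟩, ⟨hw, hz⟩, rfl⟩
      exact (convex_convexHull ℝ s).sum_mem (fun i _ => hw.1 i) hw.2
        fun i _ => subset_convexHull ℝ s (hz i (Set.mem_univ i))
  rw [hhull]
  exact ((isCompact_stdSimplex ℝ _).prod (isCompact_univ_pi fun _ => hs)).image hsum

end CompactHull

theorem nonneg_of_forall_nonneg_lt_add_mul {v α a : ℝ} (h : ∀ t, 0 ≤ t → v < α + a * t) :
    0 ≤ a := by
  by_contra! ha
  have hv := h 0 le_rfl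
  have := h ((α - v) / -a) (div_nonneg (by linarith) (by linarith))
  have hslope : a * ((α - v) / -a) = v - α := by
    field_simp [ha.ne]
    ring
  linarith

theorem exists_weight_lt_of_disjoint_quadrant {T : Set (ℝ × ℝ)} (hTconv : Convex ℝ T)
    (hTcomp : IsCompact T) {c : ℝ} (hdisj : Disjoint T (Set.Ici c ×ˢ Set.Ici c)) :
    ∃ p ∈ Set.Icc (0 : ℝ) 1, ∀ y ∈ T, p * y.1 + (1 - p) * y.2 < c := by
  rcases T.eq_empty_or_nonempty with rfl | ⟨y₀, hy₀⟩
  · exact ⟨0, ⟨le_rfl, zero_le_one⟩, by simp⟩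
  obtain ⟨f, u, v, hfT, huv, hfQ⟩ := geometric_hahn_banach_compact_closed hTconv hTcomp
    ((convex_Ici c).prod (convex_Ici c)) (isClosed_Ici.prod isClosed_Ici) hdisj
  set a := f (1, 0)
  set b := f (0, 1)
  have hf (y : ℝ × ℝ) : f y = a * y.1 + b * y.2 := by
    calc f y = f (y.1 • ((1 : ℝ), (0 : ℝ)) + y.2 • ((0 : ℝ), (1 : ℝ))) := by
          congr 1; ext <;> simp
      _ = a * y.1 + b * y.2 := by
          rw [map_add, map_smul, map_smul, smul_eq_mul, smul_eq_mul, mul_comm, mul_comm y.2]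
  have hQ (t₁ t₂ : ℝ) (h₁ : 0 ≤ t₁) (h₂ : 0 ≤ t₂) : v < a * (c + t₁) + b * (c + t₂) :=
    hf (c + t₁, c + t₂) ▸ hfQ _ ⟨by simpa, by simpa⟩
  have ha : 0 ≤ a := nonneg_of_forall_nonneg_lt_add_mul (v := v) (α := (a + b) * c)
    fun t ht => by linarith [hQ t 0 ht le_rfl]
  have hb : 0 ≤ b := nonneg_of_forall_nonneg_lt_add_mul (v := v) (α := (a + b) * c)
    fun t ht => by linarith [hQ 0 t le_rfl ht]
  have hcorner := hQ 0 0 le_rfl le_rfl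
  have hab : 0 < a + b := by
    by_contra! hab
    have hy₀ := hf y₀ ▸ hfT y₀ hy₀
    rw [show a = 0 by linarith, show b = 0 by linarith] at hy₀ hcorner
    linarith
  refine ⟨a / (a + b), ⟨by positivity, div_le_one_of_le₀ (by linarith) hab.le⟩, fun y hy => ?_⟩
  have hy := hf y ▸ hfT y hy
  have hcomb : a / (a + b) * y.1 + (1 - a / (a + b)) * y.2 = (a * y.1 + b * y.2) / (a + b) := by
    field_simp
    ring
  rw [hcomb, div_lt_iff₀ hab]
  linarith

theorem convexHull_quadrant_xor_weight_lt {K : Set (ℝ × ℝ)} (hK : IsCompact K) (c : ℝ) :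
    Xor (∃ y ∈ convexHull ℝ K, c ≤ y.1 ∧ c ≤ y.2)
      (∃ p ∈ Set.Icc (0 : ℝ) 1, ∀ y ∈ K, p * y.1 + (1 - p) * y.2 < c) := by
  rw [xor_iff_not_iff']
  constructor
  · intro h
    obtain ⟨p, hp, hlt⟩ := exists_weight_lt_of_disjoint_quadrant (convex_convexHull ℝ K)
      hK.convexHull_of_finiteDimensional (Set.disjoint_left.2 fun y hy hq => h ⟨y, hy, hq⟩)
    exact ⟨p, hp, fun y hy => hlt y (subset_convexHull ℝ K hy)⟩
  · rintro ⟨p, ⟨hp0, hp1⟩, hlt⟩ ⟨y, hy, h₁, h₂⟩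
    have hlin : IsLinearMap ℝ fun y : ℝ × ℝ => p * y.1 + (1 - p) * y.2 :=
      ⟨fun _ _ => by simp only [Prod.fst_add, Prod.snd_add]; ring,
        fun _ _ => by simp only [Prod.smul_fst, Prod.smul_snd, smul_eq_mul]; ring⟩
    have hy' : p * y.1 + (1 - p) * y.2 < c := convexHull_min hlt (convex_halfSpace_lt hlin c) hy
    nlinarith [mul_le_mul_of_nonneg_left h₁ hp0, mul_le_mul_of_nonneg_left h₂ (sub_nonneg.2 hp1)]

section Frobenius

variable {m : Type*} [Fintype m]

theorem frob_add_left (A B X : Matrix m m ℝ) : frob (A + B) X = frob A X + frob B X := by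
  simp only [frob, transpose_add, Matrix.add_mul, trace_add]

theorem frob_smul_left (c : ℝ) (A X : Matrix m m ℝ) : frob (c • A) X = c * frob A X := by
  simp only [frob, transpose_smul, Matrix.smul_mul, trace_smul, smul_eq_mul]

@[simps]
noncomputable def frobLinear (A : Matrix m m ℝ) : Matrix m m ℝ →ₗ[ℝ] ℝ where
  toFun := frob A
  map_add' X Y := by simp only [frob, Matrix.mul_add, trace_add]
  map_smul' c X := by simp only [frob, Matrix.mul_smul, trace_smul, smul_eq_mul, RingHom.id_apply]

end Frobenius

theorem sdp_duality_dichotomy_general {n : ℕ} (S : Set (Matrix (Fin n) (Fin n) ℝ))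
    (hScomp : IsCompact S)
    (A₁ A₂ : Matrix (Fin n) (Fin n) ℝ) (ε : ℝ) :
    Xor'
      (∃ X ∈ convexHull ℝ S, ε ≤ frob A₁ X ∧ ε ≤ frob A₂ X)
      (∃ p ∈ Set.Icc (0 : ℝ) 1, ∀ X ∈ S, frob (p • A₁ + (1 - p) • A₂) X < ε) := by
  set φ := (frobLinear A₁).prod (frobLinear A₂)
  have h := convexHull_quadrant_xor_weight_lt (hScomp.image φ.continuous_of_finiteDimensional) ε
  rw [← φ.image_convexHull] at h
  show Xor _ _
  simpa [φ, frob_add_left, frob_smul_left] using h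

/-- duality dichotomy (Lemma 3 of the paper). -/
theorem sdp_duality_dichotomy {n : ℕ} (S : Set (Matrix (Fin n) (Fin n) ℝ))
    (hSne : S.Nonempty) (hScomp : IsCompact S)
    (A₁ A₂ : Matrix (Fin n) (Fin n) ℝ) (ε : ℝ) (hε : 0 < ε) :
    Xor'
      (∃ X ∈ convexHull ℝ S, ε ≤ frob A₁ X ∧ ε ≤ frob A₂ X)
      (∃ p ∈ Set.Icc (0 : ℝ) 1, ∀ X ∈ S, frob (p • A₁ + (1 - p) • A₂) X < ε) :=
  sdp_duality_dichotomy_general S hScomp A₁ A₂ ε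
end

section
/- Let A₁, A₂ and X₁, X₂, …, X_m be real n×n matrices and let ε > 0. Suppose there does not exist p ∈ [0,1] such that (p·A₁ + (1−p)·A₂) • X_i < ε/2 for all i = 1, …, m. Then there exist nonnegative weights q₁, …, q_m summing to 1 such that the matrix X = Σ_{i=1}^m q_i X_i satisfies A₁ • X ≥ ε/2 and A₂ • X ≥ ε/2. -/
/-!
Read `(A₁ • Xᵢ, A₂ • Xᵢ)` as the payoffs of a zero-sum game in which one player mixes the `Xᵢ`
and the other mixes `A₁, A₂`. The hypothesis says that every mixed strategy `(p, 1 - p)` is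
answered by some `Xᵢ` worth at least `ε / 2`, so the game has value at least `ε / 2`; by
the minimax theorem the first player then has a mixed strategy `q` securing `ε / 2` against
`A₁` and against `A₂` alike.
-/

open Matrix BigOperators

theorem LinearMap.exists_isSaddlePointOn {E F : Type*} [NormedAddCommGroup E] [NormedSpace ℝ E]
    [FiniteDimensional ℝ E] [NormedAddCommGroup F] [NormedSpace ℝ F] [FiniteDimensional ℝ F]
    (B : E →ₗ[ℝ] F →ₗ[ℝ] ℝ) {X : Set E} {Y : Set F} (hX : X.Nonempty) (hXc : Convex ℝ X)
    (hXk : IsCompact X) (hY : Y.Nonempty) (hYc : Convex ℝ Y) (hYk : IsCompact Y) :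
    ∃ a ∈ X, ∃ b ∈ Y, IsSaddlePointOn X Y (fun x y => B x y) a b :=
  Sion.exists_isSaddlePointOn hX hXc hXk
    (fun y _ =>
      (B.flip y).continuous_of_finiteDimensional.lowerSemicontinuous.lowerSemicontinuousOn X)
    (fun y _ => ((B.flip y).convexOn hXc).quasiconvexOn) hYc hY hYk
    (fun x _ =>
      (B x).continuous_of_finiteDimensional.upperSemicontinuous.upperSemicontinuousOn Y)
    (fun x _ => ((B x).concaveOn hYc).quasiconcaveOn)

theorem exists_mem_stdSimplex_forall_le_vecMul {ι κ : Type*} [Fintype ι] [Fintype κ] [Nonempty κ]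
    (v : Matrix ι κ ℝ) (c : ℝ) (h : ∀ p ∈ stdSimplex ℝ κ, ∃ i, c ≤ (v *ᵥ p) i) :
    ∃ q ∈ stdSimplex ℝ ι, ∀ j, c ≤ (q ᵥ* v) j := by
  classical
  have hκ : (stdSimplex ℝ κ).Nonempty := ⟨_, single_mem_stdSimplex ℝ (Classical.arbitrary κ)⟩
  have hι : (stdSimplex ℝ ι).Nonempty := by
    obtain ⟨p, hp⟩ := hκ
    obtain ⟨i, -⟩ := h p hp
    exact ⟨_, single_mem_stdSimplex ℝ i⟩
  let B : (κ → ℝ) →ₗ[ℝ] (ι → ℝ) →ₗ[ℝ] ℝ := (dotProductBilin ℝ ℝ).flip ∘ₗ v.mulVecLin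
  obtain ⟨p, hp, q, hq, hpq⟩ := B.exists_isSaddlePointOn hκ (convex_stdSimplex ℝ κ)
    (isCompact_stdSimplex ℝ κ) hι (convex_stdSimplex ℝ ι) (isCompact_stdSimplex ℝ ι)
  refine ⟨q, hq, fun j => ?_⟩
  obtain ⟨i, hi⟩ := h p hp
  calc c ≤ (v *ᵥ p) i := hi
    _ = B p (Pi.single i 1) := by simp [B]
    _ ≤ B (Pi.single j 1) q := hpq _ (single_mem_stdSimplex ℝ j) _ (single_mem_stdSimplex ℝ i)
    _ = (q ᵥ* v) j := by simp [B, vecMul_apply]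

theorem frob_add_smul_left {ι : Type*} [Fintype ι] (a b : ℝ) (A B X : Matrix ι ι ℝ) :
    frob (a • A + b • B) X = a * frob A X + b * frob B X := by
  simp [frob, add_mul, trace_add]

theorem frob_sum_smul_right {ι κ : Type*} [Fintype ι] [Fintype κ] (A : Matrix ι ι ℝ) (q : κ → ℝ)
    (X : κ → Matrix ι ι ℝ) : frob A (∑ k, q k • X k) = ∑ k, q k * frob A (X k) := by
  simp [frob, Matrix.mul_sum]

theorem primal_recovery_general {n m : ℕ} (A₁ A₂ : Matrix (Fin n) (Fin n) ℝ)
    (X : Fin m → Matrix (Fin n) (Fin n) ℝ) (ε : ℝ)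
    (h : ¬ ∃ p ∈ Set.Icc (0 : ℝ) 1,
        ∀ i, frob (p • A₁ + (1 - p) • A₂) (X i) < ε / 2) :
    ∃ q : Fin m → ℝ, (∀ i, 0 ≤ q i) ∧ (∑ i, q i) = 1 ∧
      ε / 2 ≤ frob A₁ (∑ i, q i • X i) ∧ ε / 2 ≤ frob A₂ (∑ i, q i • X i) := by
  push Not at h
  let payoff : Matrix (Fin m) (Fin 2) ℝ := fun i => ![frob A₁ (X i), frob A₂ (X i)]
  have hvalue : ∀ p ∈ stdSimplex ℝ (Fin 2), ∃ i, ε / 2 ≤ (payoff *ᵥ p) i := by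
    intro p hp
    have hp₁ : p 1 = 1 - p 0 := by linarith [Fin.sum_univ_two p ▸ hp.2]
    obtain ⟨i, hi⟩ := h (p 0) (mem_Icc_of_mem_stdSimplex hp 0)
    refine ⟨i, ?_⟩
    simpa [frob_add_smul_left, mulVec, dotProduct, payoff, hp₁, mul_comm] using hi
  obtain ⟨q, ⟨hq_nonneg, hq_sum⟩, hq⟩ :=
    exists_mem_stdSimplex_forall_le_vecMul payoff (ε / 2) hvalue
  refine ⟨q, hq_nonneg, hq_sum, ?_, ?_⟩
  · simpa [frob_sum_smul_right, vecMul, dotProduct, payoff] using hq 0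
  · simpa [frob_sum_smul_right, vecMul, dotProduct, payoff] using hq 1

/-- Corollary 1 of the paper (recovering a primal solution). -/
theorem primal_recovery {n m : ℕ} (A₁ A₂ : Matrix (Fin n) (Fin n) ℝ)
    (X : Fin m → Matrix (Fin n) (Fin n) ℝ) (ε : ℝ) (hε : 0 < ε)
    (h : ¬ ∃ p ∈ Set.Icc (0 : ℝ) 1,
        ∀ i, frob (p • A₁ + (1 - p) • A₂) (X i) < ε / 2) :
    ∃ q : Fin m → ℝ, (∀ i, 0 ≤ q i) ∧ (∑ i, q i) = 1 ∧
      ε / 2 ≤ frob A₁ (∑ i, q i • X i) ∧ ε / 2 ≤ frob A₂ (∑ i, q i • X i) :=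
  primal_recovery_general A₁ A₂ X ε h
end

section
/- Let A be a real symmetric n×n matrix, let c ∈ ℝ, and let x₁, x₂ ∈ ℝⁿ satisfy x₁ᵀ A x₁ > c and x₂ᵀ A x₂ < c. Then the quadratic equation (x₁ᵀ A x₁ − c)·t² + (2 x₁ᵀ A x₂)·t + (x₂ᵀ A x₂ − c) = 0 has a real root t, and for any such root, the vectors x̃₁ = (t·x₁ + x₂)/√(t² + 1) and x̃₂ = (x₁ − t·x₂)/√(t² + 1) satisfy x̃₁ x̃₁ᵀ + x̃₂ x̃₂ᵀ = x₁ x₁ᵀ + x₂ x₂ᵀ and x̃₁ᵀ A x̃₁ = c. -/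
/-!
A quadratic with leading and constant coefficients of opposite signs has a nonnegative
discriminant, hence a real root `t`. The map `(x₁, x₂) ↦ (t x₁ + x₂, x₁ - t x₂) / √(t² + 1)`
is a rotation in the plane of the pair, so it preserves `x₁ x₁ᵀ + x₂ x₂ᵀ`; and by symmetry
of `A`, `x̃₁ᵀ A x̃₁ - c` is the quadratic evaluated at `t`, divided by `t² + 1`, which
vanishes.
-/

open Matrix

theorem exists_quadratic_eq_zero_of_mul_neg {a b d : ℝ} (had : a * d < 0) :
    ∃ t : ℝ, a * t ^ 2 + b * t + d = 0 := by
  have ha : a ≠ 0 := by rintro rfl; simp at had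
  have hdiscrim : 0 ≤ discrim a b d := by unfold discrim; nlinarith [sq_nonneg b]
  obtain ⟨t, ht⟩ :=
    exists_quadratic_eq_zero ha ⟨√(discrim a b d), (Real.mul_self_sqrt hdiscrim).symm⟩
  exact ⟨t, by rw [sq]; exact ht⟩

section CommRing

variable {ι R : Type*} [CommRing R]

theorem vecMulVec_rotation_add_vecMulVec_rotation {s t : R} (hst : s ^ 2 * (t ^ 2 + 1) = 1)
    (x y : ι → R) :
    vecMulVec (s • (t • x + y)) (s • (t • x + y)) +
        vecMulVec (s • (x - t • y)) (s • (x - t • y)) =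
      vecMulVec x x + vecMulVec y y := by
  ext i j
  simp only [vecMulVec_apply, Matrix.add_apply, Pi.smul_apply, Pi.add_apply, Pi.sub_apply,
    smul_eq_mul]
  linear_combination (x i * x j + y i * y j) * hst

variable [Fintype ι]

theorem Matrix.IsSymm.dotProduct_mulVec_comm {A : Matrix ι ι R} (hA : A.IsSymm) (x y : ι → R) :
    y ⬝ᵥ A *ᵥ x = x ⬝ᵥ A *ᵥ y := by
  rw [dotProduct_mulVec, dotProduct_comm, ← mulVec_transpose, hA.eq]

theorem Matrix.IsSymm.dotProduct_mulVec_smul_add {A : Matrix ι ι R} (hA : A.IsSymm) (s t : R)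
    (x y : ι → R) :
    s • (t • x + y) ⬝ᵥ A *ᵥ (s • (t • x + y)) =
      s ^ 2 * (t ^ 2 * (x ⬝ᵥ A *ᵥ x) + 2 * t * (x ⬝ᵥ A *ᵥ y) + y ⬝ᵥ A *ᵥ y) := by
  simp only [mulVec_smul, mulVec_add, smul_dotProduct, dotProduct_smul, add_dotProduct,
    dotProduct_add, smul_eq_mul, hA.dotProduct_mulVec_comm x y]
  ring

end CommRing

theorem inv_sqrt_sq_add_one_sq_mul (t : ℝ) : (√(t ^ 2 + 1))⁻¹ ^ 2 * (t ^ 2 + 1) = 1 := by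
  rw [inv_pow, Real.sq_sqrt (by positivity)]
  exact inv_mul_cancel₀ (by positivity)

/-- the Sturm–Zhang rotation step. -/
theorem sturm_zhang_rotation_step {n : ℕ} (A : Matrix (Fin n) (Fin n) ℝ)
    (hA : A.IsSymm) (c : ℝ) (x₁ x₂ : Fin n → ℝ)
    (h₁ : c < x₁ ⬝ᵥ A.mulVec x₁) (h₂ : x₂ ⬝ᵥ A.mulVec x₂ < c) :
    (∃ t : ℝ, (x₁ ⬝ᵥ A.mulVec x₁ - c) * t ^ 2 + (2 * (x₁ ⬝ᵥ A.mulVec x₂)) * t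
        + (x₂ ⬝ᵥ A.mulVec x₂ - c) = 0) ∧
    ∀ t : ℝ, (x₁ ⬝ᵥ A.mulVec x₁ - c) * t ^ 2 + (2 * (x₁ ⬝ᵥ A.mulVec x₂)) * t
        + (x₂ ⬝ᵥ A.mulVec x₂ - c) = 0 →
      vecMulVec ((Real.sqrt (t ^ 2 + 1))⁻¹ • (t • x₁ + x₂))
          ((Real.sqrt (t ^ 2 + 1))⁻¹ • (t • x₁ + x₂)) +
        vecMulVec ((Real.sqrt (t ^ 2 + 1))⁻¹ • (x₁ - t • x₂))
          ((Real.sqrt (t ^ 2 + 1))⁻¹ • (x₁ - t • x₂)) =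
        vecMulVec x₁ x₁ + vecMulVec x₂ x₂ ∧
      ((Real.sqrt (t ^ 2 + 1))⁻¹ • (t • x₁ + x₂)) ⬝ᵥ
          A.mulVec ((Real.sqrt (t ^ 2 + 1))⁻¹ • (t • x₁ + x₂)) = c := by
  refine ⟨exists_quadratic_eq_zero_of_mul_neg
      (mul_neg_of_pos_of_neg (by linarith) (by linarith)), fun t ht => ⟨?_, ?_⟩⟩
  · exact vecMulVec_rotation_add_vecMulVec_rotation (inv_sqrt_sq_add_one_sq_mul t) x₁ x₂
  · rw [hA.dotProduct_mulVec_smul_add]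
    linear_combination (√(t ^ 2 + 1))⁻¹ ^ 2 * ht + c * inv_sqrt_sq_add_one_sq_mul t
end

section
/- Let A be a real symmetric n×n matrix, let r ≥ 1, and let x₁, …, x_r ∈ ℝⁿ be arbitrary vectors; set X = Σ_{i=1}^r x_i x_iᵀ and a = A • X. Then there exist vectors y₁, …, y_r ∈ ℝⁿ such that Σ_{i=1}^r y_i y_iᵀ = X and y_iᵀ A y_i = a/r for every i = 1, …, r. In particular, if A • X ≥ a₀ then y_iᵀ A y_i ≥ a₀/r for all i. -/
/-!
The value `v ⬝ᵥ A *ᵥ v = A • vvᵀ` is linear in `vvᵀ`, so any change of the vectors that keeps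
`∑ i, y i (y i)ᵀ` fixed also keeps `∑ i, y i ⬝ᵥ A *ᵥ y i = A • X` fixed. Rotating a pair `(u, w)` to
`(cos θ • u + sin θ • w, -sin θ • u + cos θ • w)` keeps `uuᵀ + wwᵀ`, and by the intermediate value
theorem on `θ ∈ [0, π/2]` the form takes, at the first rotated vector, any value between its values
at `u` and `w`. While some vector is off the average `A • X / r`, there is one below and one above
it; rotating that pair puts the lower one on the average and moves no other vector off it, so
induction on the number of vectors off the average ends with all of them on it.
-/

open Matrix BigOperators

open Finset Function

theorem Finset.exists_lt_and_exists_gt_of_sum_eq_card_nsmul {ι M : Type*} [Fintype ι]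
    [AddCommMonoid M] [LinearOrder M] [IsOrderedCancelAddMonoid M] {f : ι → M} {t : M}
    (hsum : ∑ i, f i = Fintype.card ι • t) {k : ι} (hk : f k ≠ t) :
    (∃ i, f i < t) ∧ ∃ j, t < f j := by
  rw [← Finset.card_univ, ← sum_const] at hsum
  constructor
  · by_contra! h
    exact (sum_lt_sum (fun i _ => h i) ⟨k, mem_univ k, (h k).lt_of_ne' hk⟩).ne hsum.symm
  · by_contra! h
    exact (sum_lt_sum (fun i _ => h i) ⟨k, mem_univ k, (h k).lt_of_ne hk⟩).ne hsum

theorem Fintype.sum_comp_update_update {ι α M : Type*} [Fintype ι] [DecidableEq ι]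
    [AddCommMonoid M] (g : α → M) (x : ι → α) {i j : ι} (hij : i ≠ j) {a b : α}
    (h : g a + g b = g (x i) + g (x j)) :
    ∑ k, g (update (update x i a) j b k) = ∑ k, g (x k) := by
  have hj : j ∈ univ.erase i := mem_erase.2 ⟨hij.symm, mem_univ j⟩
  rw [← add_sum_erase _ _ (mem_univ i), ← add_sum_erase _ _ hj,
    ← add_sum_erase _ _ (mem_univ i), ← add_sum_erase _ _ hj]
  have hrest : ∀ k ∈ (univ.erase i).erase j, g (update (update x i a) j b k) = g (x k) :=
    fun k hk => by
      obtain ⟨hkj, hki⟩ := (mem_erase.1 hk).imp_right (fun h => (mem_erase.1 h).1)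
      rw [update_of_ne hkj, update_of_ne hki]
  rw [Finset.sum_congr rfl hrest, update_of_ne hij, update_self, update_self,
    ← add_assoc, ← add_assoc, h]

variable {ι m : Type*} [Fintype ι] [Fintype m]

lemma frob_vecMulVec (A : Matrix m m ℝ) (v : m → ℝ) :
    frob A (vecMulVec v v) = v ⬝ᵥ A *ᵥ v := by
  rw [frob, mul_vecMulVec, trace_vecMulVec, mulVec_transpose, dotProduct_mulVec]

lemma frob_sum_vecMulVec (A : Matrix m m ℝ) (x : ι → m → ℝ) :
    frob A (∑ i, vecMulVec (x i) (x i)) = ∑ i, x i ⬝ᵥ A *ᵥ x i := by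
  simp only [frob, Matrix.mul_sum, Matrix.trace_sum, ← frob_vecMulVec]

theorem exists_rotation_dotProduct_mulVec_eq (A : Matrix m m ℝ) {u w : m → ℝ} {t : ℝ}
    (ht : t ∈ Set.uIcc (u ⬝ᵥ A *ᵥ u) (w ⬝ᵥ A *ᵥ w)) :
    ∃ u' w' : m → ℝ, u' ⬝ᵥ A *ᵥ u' = t ∧
      vecMulVec u' u' + vecMulVec w' w' = vecMulVec u u + vecMulVec w w := by
  let rot : ℝ → m → ℝ := fun θ => Real.cos θ • u + Real.sin θ • w
  have hcont : Continuous fun θ => rot θ ⬝ᵥ A *ᵥ rot θ := by fun_prop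
  obtain ⟨θ, -, hθ⟩ := intermediate_value_uIcc (a := 0) (b := Real.pi / 2)
    hcont.continuousOn (by simpa [rot] using ht)
  refine ⟨rot θ, -Real.sin θ • u + Real.cos θ • w, hθ, ?_⟩
  ext i j
  simp only [rot, Matrix.add_apply, vecMulVec_apply, Pi.add_apply, Pi.smul_apply, smul_eq_mul]
  linear_combination (u i * u j + w i * w j) * Real.sin_sq_add_cos_sq θ

theorem exists_sum_vecMulVec_eq_of_frob_eq (A : Matrix m m ℝ) (t : ℝ) (x : ι → m → ℝ)
    (hx : frob A (∑ i, vecMulVec (x i) (x i)) = Fintype.card ι • t) :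
    ∃ y : ι → m → ℝ, ∑ i, vecMulVec (y i) (y i) = ∑ i, vecMulVec (x i) (x i) ∧
      ∀ i, y i ⬝ᵥ A *ᵥ y i = t := by
  classical
  induction hN : #{i | x i ⬝ᵥ A *ᵥ x i ≠ t} using Nat.strong_induction_on generalizing x with
  | _ N ih =>
  by_cases hgood : ∀ i, x i ⬝ᵥ A *ᵥ x i = t
  · exact ⟨x, rfl, hgood⟩
  obtain ⟨k, hk⟩ := not_forall.1 hgood
  obtain ⟨⟨i, hi⟩, ⟨j, hj⟩⟩ := exists_lt_and_exists_gt_of_sum_eq_card_nsmul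
    ((frob_sum_vecMulVec A x).symm.trans hx) hk
  have hij : i ≠ j := fun h => (hi.trans hj).ne (by rw [h])
  obtain ⟨u, w, hu, huw⟩ := exists_rotation_dotProduct_mulVec_eq A
    ⟨min_le_of_left_le hi.le, le_max_of_le_right hj.le⟩
  set x' := update (update x i u) j w
  have hgram : ∑ k, vecMulVec (x' k) (x' k) = ∑ k, vecMulVec (x k) (x k) :=
    Fintype.sum_comp_update_update (fun v => vecMulVec v v) x hij huw
  have hbad : #{k | x' k ⬝ᵥ A *ᵥ x' k ≠ t} < N := by
    rw [← hN]
    refine (card_le_card fun k hk => ?_).trans_lt (card_erase_lt_of_mem (a := i) ?_)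
    · simp only [mem_filter, mem_univ, true_and, mem_erase] at hk ⊢
      rcases eq_or_ne k j with rfl | hkj
      · exact ⟨hij.symm, hj.ne'⟩
      have hki : k ≠ i := by
        rintro rfl
        simp [x', update_of_ne hkj, hu] at hk
      simpa [x', update_of_ne hkj, update_of_ne hki, hki] using hk
    · simpa using hi.ne
  obtain ⟨y, hy, hyt⟩ := ih _ hbad x' (hgram ▸ hx) rfl
  exact ⟨y, hy.trans hgram, hyt⟩

theorem exists_sum_vecMulVec_eq_forall_eq_frob_div (A : Matrix m m ℝ) (x : ι → m → ℝ) :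
    ∃ y : ι → m → ℝ, ∑ i, vecMulVec (y i) (y i) = ∑ i, vecMulVec (x i) (x i) ∧
      ∀ i, y i ⬝ᵥ A *ᵥ y i = frob A (∑ i, vecMulVec (x i) (x i)) / Fintype.card ι := by
  rcases isEmpty_or_nonempty ι with _ | _
  · exact ⟨x, rfl, isEmptyElim⟩
  refine exists_sum_vecMulVec_eq_of_frob_eq A _ x ?_
  rw [nsmul_eq_mul, mul_div_cancel₀ _ (Nat.cast_ne_zero.2 Fintype.card_ne_zero)]

theorem sturm_zhang_decomposition_general {n r : ℕ}
    (A : Matrix (Fin n) (Fin n) ℝ)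
    (x : Fin r → Fin n → ℝ) :
    ∃ y : Fin r → Fin n → ℝ,
      (∑ i, vecMulVec (y i) (y i)) = (∑ i, vecMulVec (x i) (x i)) ∧
      (∀ i, y i ⬝ᵥ A.mulVec (y i)
          = frob A (∑ i, vecMulVec (x i) (x i)) / (r : ℝ)) ∧
      (∀ a₀ : ℝ, a₀ ≤ frob A (∑ i, vecMulVec (x i) (x i)) →
        ∀ i, a₀ / (r : ℝ) ≤ y i ⬝ᵥ A.mulVec (y i)) := by
  obtain ⟨y, hy, hyq⟩ := exists_sum_vecMulVec_eq_forall_eq_frob_div A x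
  rw [Fintype.card_fin] at hyq
  exact ⟨y, hy, hyq, fun a₀ ha i => hyq i ▸ div_le_div_of_nonneg_right ha r.cast_nonneg⟩

/-- guarantee of the Sturm–Zhang rotation procedure (Lemma 2). -/
theorem sturm_zhang_decomposition {n r : ℕ} (hr : 1 ≤ r)
    (A : Matrix (Fin n) (Fin n) ℝ) (hA : A.IsSymm)
    (x : Fin r → Fin n → ℝ) :
    ∃ y : Fin r → Fin n → ℝ,
      (∑ i, vecMulVec (y i) (y i)) = (∑ i, vecMulVec (x i) (x i)) ∧
      (∀ i, y i ⬝ᵥ A.mulVec (y i)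
          = frob A (∑ i, vecMulVec (x i) (x i)) / (r : ℝ)) ∧
      (∀ a₀ : ℝ, a₀ ≤ frob A (∑ i, vecMulVec (x i) (x i)) →
        ∀ i, a₀ / (r : ℝ) ≤ y i ⬝ᵥ A.mulVec (y i)) :=
  sturm_zhang_decomposition_general A x
end

section
/- Let A be a real symmetric n×n matrix, b ∈ ℝⁿ, M a real symmetric positive definite n×n matrix, c ∈ ℝ, κ > 0, and δ > 0. Define the (n+1)×(n+1) matrices A₁ = (1/(2κ))·[[−c, bᵀ],[b, A]] and A₂ = (1/(2κ))·[[1, 0],[0, −M]]. Let y ∈ ℝ^{n+1} satisfy ‖y‖ ≤ 1, yᵀ A₁ y ≥ δ, and yᵀ A₂ y ≥ δ. Write y = (α, ỹ) with α ∈ ℝ and ỹ ∈ ℝⁿ. Then α ≠ 0, and the vector x = ỹ/α satisfies xᵀ A x + 2 bᵀ x ≥ c + 2κδ and xᵀ M x ≤ 1 − 2κδ; in particular xᵀ A x + 2 bᵀ x ≥ c and xᵀ M x ≤ 1. -/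
open Matrix BigOperators

noncomputable def euclNorm {m : Type*} [Fintype m] (x : m → ℝ) : ℝ :=
  Real.sqrt (∑ i, x i ^ 2)

/-- The block matrix `A₁ = (1/(2κ))·[[−c, bᵀ],[b, A]]`. -/
noncomputable def A1mat {n : ℕ} (A : Matrix (Fin n) (Fin n) ℝ) (b : Fin n → ℝ)
    (c κ : ℝ) : Matrix (Unit ⊕ Fin n) (Unit ⊕ Fin n) ℝ :=
  (2 * κ)⁻¹ • Matrix.fromBlocks (Matrix.of fun _ _ => -c) (Matrix.of fun _ j => b j)
      (Matrix.of fun i _ => b i) A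

/-- The block matrix `A₂ = (1/(2κ))·[[1, 0],[0, −M]]`. -/
noncomputable def A2mat {n : ℕ} (M : Matrix (Fin n) (Fin n) ℝ)
    (κ : ℝ) : Matrix (Unit ⊕ Fin n) (Unit ⊕ Fin n) ℝ :=
  (2 * κ)⁻¹ • Matrix.fromBlocks (Matrix.of fun _ _ => (1 : ℝ)) 0 0 (-M)

/-! Write `y = (α, v)`. The two hypotheses read `2κδ ≤ vᵀAv + 2α bᵀv − cα²` and
`2κδ ≤ α² − vᵀMv`; as `M ⪰ 0` the second forces `α² ≥ 2κδ > 0`, while `α² ≤ ‖y‖² ≤ 1`.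
For `x = v / α` both quadratic expressions are those in `v` divided by `α²`, and dividing
the margin `2κδ` by `α² ≤ 1` only enlarges it. -/

namespace Matrix

variable {R l m : Type*} [CommSemiring R] [Fintype l] [Fintype m]

theorem sumElim_dotProduct_fromBlocks_mulVec_sumElim (A : Matrix l l R) (B : Matrix l m R)
    (C : Matrix m l R) (D : Matrix m m R) (u : l → R) (v : m → R) :
    Sum.elim u v ⬝ᵥ fromBlocks A B C D *ᵥ Sum.elim u v =
      u ⬝ᵥ A *ᵥ u + u ⬝ᵥ B *ᵥ v + (v ⬝ᵥ C *ᵥ u + v ⬝ᵥ D *ᵥ v) := by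
  rw [fromBlocks_mulVec, sumElim_dotProduct_sumElim, Sum.elim_comp_inl, Sum.elim_comp_inr,
    dotProduct_add, dotProduct_add]

theorem smul_dotProduct_mulVec_smul (A : Matrix m m R) (t : R) (v : m → R) :
    (t • v) ⬝ᵥ A *ᵥ (t • v) = t ^ 2 * (v ⬝ᵥ A *ᵥ v) := by
  simp only [mulVec_smul, dotProduct_smul, smul_dotProduct, smul_eq_mul]
  ring

end Matrix

theorem euclNorm_nonneg {m : Type*} [Fintype m] (x : m → ℝ) : 0 ≤ euclNorm x :=
  Real.sqrt_nonneg _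

theorem sq_apply_le_euclNorm_sq {m : Type*} [Fintype m] (x : m → ℝ) (i : m) :
    x i ^ 2 ≤ euclNorm x ^ 2 := by
  rw [euclNorm, Real.sq_sqrt (by positivity)]
  exact Finset.single_le_sum (fun j _ => sq_nonneg (x j)) (Finset.mem_univ i)

section

variable {n : ℕ} (α : ℝ) (v : Fin n → ℝ)

theorem dotProduct_A1mat_mulVec (A : Matrix (Fin n) (Fin n) ℝ) (b : Fin n → ℝ) (c κ : ℝ) :
    Sum.elim (fun _ => α) v ⬝ᵥ A1mat A b c κ *ᵥ Sum.elim (fun _ => α) v =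
      (2 * κ)⁻¹ * (v ⬝ᵥ A *ᵥ v + 2 * α * (b ⬝ᵥ v) - c * α ^ 2) := by
  rw [A1mat, smul_mulVec, dotProduct_smul, smul_eq_mul,
    sumElim_dotProduct_fromBlocks_mulVec_sumElim]
  simp only [dotProduct, mulVec, of_apply, Finset.univ_unique, Finset.sum_singleton]
  have hb : ∑ i, v i * (b i * α) = α * ∑ i, b i * v i := by
    rw [Finset.mul_sum]
    exact Finset.sum_congr rfl fun i _ => by ring
  rw [hb]
  ring

theorem dotProduct_A2mat_mulVec (M : Matrix (Fin n) (Fin n) ℝ) (κ : ℝ) :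
    Sum.elim (fun _ => α) v ⬝ᵥ A2mat M κ *ᵥ Sum.elim (fun _ => α) v =
      (2 * κ)⁻¹ * (α ^ 2 - v ⬝ᵥ M *ᵥ v) := by
  rw [A2mat, smul_mulVec, dotProduct_smul, smul_eq_mul,
    sumElim_dotProduct_fromBlocks_mulVec_sumElim, zero_mulVec, zero_mulVec, dotProduct_zero,
    dotProduct_zero, neg_mulVec, dotProduct_neg]
  simp only [dotProduct, mulVec, of_apply, Finset.univ_unique, Finset.sum_singleton]
  ring

end

theorem sdp_rounding_general {n : ℕ} (A : Matrix (Fin n) (Fin n) ℝ)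
    (b : Fin n → ℝ) (M : Matrix (Fin n) (Fin n) ℝ) (hM : M.PosDef)
    (c κ δ : ℝ) (hκ : 0 < κ) (hδ : 0 < δ)
    (y : Unit ⊕ Fin n → ℝ) (hy : euclNorm y ≤ 1)
    (h1 : δ ≤ y ⬝ᵥ (A1mat A b c κ).mulVec y)
    (h2 : δ ≤ y ⬝ᵥ (A2mat M κ).mulVec y) :
    y (Sum.inl ()) ≠ 0 ∧
    (let x : Fin n → ℝ := (y (Sum.inl ()))⁻¹ • fun i => y (Sum.inr i)
     c + 2 * κ * δ ≤ x ⬝ᵥ A.mulVec x + 2 * (b ⬝ᵥ x) ∧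
     x ⬝ᵥ M.mulVec x ≤ 1 - 2 * κ * δ ∧
     c ≤ x ⬝ᵥ A.mulVec x + 2 * (b ⬝ᵥ x) ∧
     x ⬝ᵥ M.mulVec x ≤ 1) := by
  have hα_le : y (Sum.inl ()) ^ 2 ≤ 1 :=
    (sq_apply_le_euclNorm_sq y _).trans (pow_le_one₀ (euclNorm_nonneg y) hy)
  obtain ⟨α, v, rfl⟩ : ∃ α v, y = Sum.elim (fun _ => α) v :=
    ⟨y (Sum.inl ()), y ∘ Sum.inr, (Sum.elim_comp_inl_inr y).symm⟩
  simp only [Sum.elim_inl, Sum.elim_inr] at hα_le ⊢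
  rw [dotProduct_A1mat_mulVec, le_inv_mul_iff₀ (by positivity)] at h1
  rw [dotProduct_A2mat_mulVec, le_inv_mul_iff₀ (by positivity)] at h2
  have hs : 0 < 2 * κ * δ := by positivity
  have hR : 0 ≤ v ⬝ᵥ M *ᵥ v := hM.posSemidef.dotProduct_mulVec_nonneg v
  have hα_pos : 0 < α ^ 2 := by linarith
  have hs_le : 2 * κ * δ ≤ 2 * κ * δ / α ^ 2 := le_div_self hs.le hα_pos hα_le
  have hxA : (α⁻¹ • v) ⬝ᵥ A *ᵥ (α⁻¹ • v) + 2 * (b ⬝ᵥ α⁻¹ • v) =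
      (v ⬝ᵥ A *ᵥ v + 2 * α * (b ⬝ᵥ v)) / α ^ 2 := by
    rw [smul_dotProduct_mulVec_smul, dotProduct_smul, smul_eq_mul]
    field_simp
  have hA_ge : c + 2 * κ * δ / α ^ 2 ≤ (α⁻¹ • v) ⬝ᵥ A *ᵥ (α⁻¹ • v) + 2 * (b ⬝ᵥ α⁻¹ • v) := by
    rw [hxA, le_div_iff₀ hα_pos, add_mul, div_mul_cancel₀ _ hα_pos.ne']
    linarith
  have hM_le : (α⁻¹ • v) ⬝ᵥ M *ᵥ (α⁻¹ • v) ≤ 1 - 2 * κ * δ / α ^ 2 := by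
    rw [smul_dotProduct_mulVec_smul, inv_pow, inv_mul_eq_div, div_le_iff₀ hα_pos, sub_mul,
      div_mul_cancel₀ _ hα_pos.ne']
    linarith
  exact ⟨sq_pos_iff.mp hα_pos, by linarith, by linarith, by linarith, by linarith⟩

/-- rounding an approximate rank-one SDP solution to a feasible
point of the trust-region feasibility problem. -/
theorem sdp_rounding {n : ℕ} (A : Matrix (Fin n) (Fin n) ℝ) (hA : A.IsSymm)
    (b : Fin n → ℝ) (M : Matrix (Fin n) (Fin n) ℝ) (hM : M.PosDef)
    (c κ δ : ℝ) (hκ : 0 < κ) (hδ : 0 < δ)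
    (y : Unit ⊕ Fin n → ℝ) (hy : euclNorm y ≤ 1)
    (h1 : δ ≤ y ⬝ᵥ (A1mat A b c κ).mulVec y)
    (h2 : δ ≤ y ⬝ᵥ (A2mat M κ).mulVec y) :
    y (Sum.inl ()) ≠ 0 ∧
    (let x : Fin n → ℝ := (y (Sum.inl ()))⁻¹ • fun i => y (Sum.inr i)
     c + 2 * κ * δ ≤ x ⬝ᵥ A.mulVec x + 2 * (b ⬝ᵥ x) ∧
     x ⬝ᵥ M.mulVec x ≤ 1 - 2 * κ * δ ∧
     c ≤ x ⬝ᵥ A.mulVec x + 2 * (b ⬝ᵥ x) ∧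
     x ⬝ᵥ M.mulVec x ≤ 1) :=
  sdp_rounding_general A b M hM c κ δ hκ hδ y hy h1 h2
end

section
/- Let A₁, A₂ be real symmetric n×n matrices with spectral norms ‖A₁‖₂ ≤ 1 and ‖A₂‖₂ ≤ 1, let ε > 0, and for p ∈ [0,1] write A(p) = p·A₁ + (1−p)·A₂. Let x₁, x₂ ∈ ℝⁿ be unit vectors and let 0 ≤ p₁ ≤ p₂ ≤ 1 satisfy p₂ − p₁ ≤ ε/8, x₁ᵀ A(p₁) x₁ ≥ 3ε/4, x₂ᵀ A(p₂) x₂ ≥ 3ε/4, x₁ᵀ A₁ x₁ ≤ x₁ᵀ A₂ x₁, and x₂ᵀ A₂ x₂ ≤ x₂ᵀ A₁ x₂. Then there does not exist p ∈ [0,1] such that both x₁ᵀ A(p) x₁ < ε/2 and x₂ᵀ A(p) x₂ < ε/2. -/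
open Matrix BigOperators

noncomputable def specNorm {m : Type*} [Fintype m] [DecidableEq m]
    (A : Matrix m m ℝ) : ℝ :=
  ‖Matrix.toEuclideanCLM (𝕜 := ℝ) A‖

/-!
Along the pencil `p ↦ A(p)`, the form `f₁ p = x₁ᵀ A(p) x₁` is affine with slope
`x₁ᵀ A₁ x₁ - x₁ᵀ A₂ x₁ ∈ [-2, 0]`, and `f₂ p = x₂ᵀ A(p) x₂` is affine with nonnegative slope.
Left of `p₁` we have `f₁ ≥ f₁ p₁ ≥ 3ε/4`, right of `p₂` we have `f₂ ≥ f₂ p₂ ≥ 3ε/4`, and in between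
`f₁` loses at most `2 (p₂ - p₁) ≤ ε/4`, so at every `p` one of the two forms is at least `ε/2`.
-/

section Bracketing

variable {f g : ℝ → ℝ} {L δ c p₁ p₂ : ℝ}

theorem le_or_le_of_antitone_of_monotone (hf : Antitone f) (hg : Monotone g)
    (hf_lip : ∀ ⦃p q⦄, p ≤ q → f p ≤ f q + L * (q - p)) (hL : 0 ≤ L)
    (hp₁₂ : p₁ ≤ p₂) (hgap : p₂ - p₁ ≤ δ) (hfp₁ : c ≤ f p₁) (hgp₂ : c ≤ g p₂) (p : ℝ) :
    c - L * δ ≤ f p ∨ c - L * δ ≤ g p := by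
  have hLδ : 0 ≤ L * δ := mul_nonneg hL (by linarith)
  rcases le_total p p₁ with hp | hp
  · exact Or.inl (by linarith [hf hp])
  rcases le_total p₂ p with hp' | hp'
  · exact Or.inr (by linarith [hg hp'])
  · have := hf_lip hp
    have : L * (p - p₁) ≤ L * δ := mul_le_mul_of_nonneg_left (by linarith) hL
    exact Or.inl (by linarith)

end Bracketing

section QuadraticForm

variable {m : Type*} [Fintype m]

theorem euclNorm_eq_norm_toLp (x : m → ℝ) : euclNorm x = ‖WithLp.toLp 2 x‖ := by
  simp only [euclNorm, EuclideanSpace.norm_eq, Real.norm_eq_abs, sq_abs]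

theorem abs_dotProduct_mulVec_le [DecidableEq m] (A : Matrix m m ℝ) (x y : m → ℝ) :
    |x ⬝ᵥ A *ᵥ y| ≤ specNorm A * euclNorm x * euclNorm y := by
  have hinner : x ⬝ᵥ A *ᵥ y =
      inner ℝ (WithLp.toLp 2 x) (toEuclideanCLM (𝕜 := ℝ) A (WithLp.toLp 2 y)) := by
    rw [toEuclideanCLM_toLp, EuclideanSpace.inner_toLp_toLp, star_trivial, dotProduct_comm]
  rw [hinner, euclNorm_eq_norm_toLp, euclNorm_eq_norm_toLp]
  calc _ ≤ ‖WithLp.toLp 2 x‖ * ‖toEuclideanCLM (𝕜 := ℝ) A (WithLp.toLp 2 y)‖ :=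
        abs_real_inner_le_norm _ _
    _ ≤ ‖WithLp.toLp 2 x‖ * (specNorm A * ‖WithLp.toLp 2 y‖) := by
        gcongr; exact (toEuclideanCLM (𝕜 := ℝ) A).le_opNorm _
    _ = _ := by ring

theorem dotProduct_mulVec_lineMap {R : Type*} [CommRing R] (A B : Matrix m m R) (x y : m → R)
    (p : R) : x ⬝ᵥ (p • A + (1 - p) • B) *ᵥ y = p * (x ⬝ᵥ A *ᵥ y) + (1 - p) * (x ⬝ᵥ B *ᵥ y) := by
  simp only [add_mulVec, smul_mulVec, dotProduct_add, dotProduct_smul, smul_eq_mul]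

variable (A B : Matrix m m ℝ) (x : m → ℝ)

theorem antitone_dotProduct_mulVec_lineMap (h : x ⬝ᵥ A *ᵥ x ≤ x ⬝ᵥ B *ᵥ x) :
    Antitone fun p : ℝ ↦ x ⬝ᵥ (p • A + (1 - p) • B) *ᵥ x := by
  intro p q hpq
  simp only [dotProduct_mulVec_lineMap]
  nlinarith

theorem monotone_dotProduct_mulVec_lineMap (h : x ⬝ᵥ B *ᵥ x ≤ x ⬝ᵥ A *ᵥ x) :
    Monotone fun p : ℝ ↦ x ⬝ᵥ (p • A + (1 - p) • B) *ᵥ x := by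
  intro p q hpq
  simp only [dotProduct_mulVec_lineMap]
  nlinarith

theorem dotProduct_mulVec_lineMap_le_add [DecidableEq m] {p q : ℝ} (hpq : p ≤ q) :
    x ⬝ᵥ (p • A + (1 - p) • B) *ᵥ x ≤ x ⬝ᵥ (q • A + (1 - q) • B) *ᵥ x +
      (specNorm A + specNorm B) * euclNorm x ^ 2 * (q - p) := by
  have hA := abs_le.1 (abs_dotProduct_mulVec_le A x x)
  have hB := abs_le.1 (abs_dotProduct_mulVec_le B x x)
  simp only [dotProduct_mulVec_lineMap]
  nlinarith [mul_le_mul_of_nonneg_left (sub_le_sub hB.2 hA.1) (sub_nonneg.2 hpq)]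

end QuadraticForm

theorem binary_search_witnesses_certify_general {n : ℕ}
    (A₁ A₂ : Matrix (Fin n) (Fin n) ℝ)
    (hA₁ : specNorm A₁ ≤ 1) (hA₂ : specNorm A₂ ≤ 1)
    (ε : ℝ)
    (x₁ x₂ : Fin n → ℝ) (hx₁ : euclNorm x₁ = 1)
    (p₁ p₂ : ℝ) (hp₁₂ : p₁ ≤ p₂)
    (hgap : p₂ - p₁ ≤ ε / 8)
    (h₁ : 3 * ε / 4 ≤ x₁ ⬝ᵥ (p₁ • A₁ + (1 - p₁) • A₂).mulVec x₁)
    (h₂ : 3 * ε / 4 ≤ x₂ ⬝ᵥ (p₂ • A₁ + (1 - p₂) • A₂).mulVec x₂)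
    (hm₁ : x₁ ⬝ᵥ A₁.mulVec x₁ ≤ x₁ ⬝ᵥ A₂.mulVec x₁)
    (hm₂ : x₂ ⬝ᵥ A₂.mulVec x₂ ≤ x₂ ⬝ᵥ A₁.mulVec x₂) :
    ¬ ∃ p ∈ Set.Icc (0 : ℝ) 1,
        x₁ ⬝ᵥ (p • A₁ + (1 - p) • A₂).mulVec x₁ < ε / 2 ∧
        x₂ ⬝ᵥ (p • A₁ + (1 - p) • A₂).mulVec x₂ < ε / 2 := by
  rintro ⟨p, -, hlt₁, hlt₂⟩
  have hlip : ∀ ⦃p q : ℝ⦄, p ≤ q → x₁ ⬝ᵥ (p • A₁ + (1 - p) • A₂) *ᵥ x₁ ≤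
      x₁ ⬝ᵥ (q • A₁ + (1 - q) • A₂) *ᵥ x₁ + 2 * (q - p) := fun p q hpq ↦
    (dotProduct_mulVec_lineMap_le_add A₁ A₂ x₁ hpq).trans <| by
      rw [hx₁, one_pow, mul_one]
      gcongr
      linarith
  rcases le_or_le_of_antitone_of_monotone (antitone_dotProduct_mulVec_lineMap A₁ A₂ x₁ hm₁)
    (monotone_dotProduct_mulVec_lineMap A₁ A₂ x₂ hm₂) hlip zero_le_two hp₁₂ hgap h₁ h₂ p
    with h | h <;> linarith

/-- the two witnesses at the final bracketing values of the binary
search jointly certify dual infeasibility. -/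
theorem binary_search_witnesses_certify {n : ℕ}
    (A₁ A₂ : Matrix (Fin n) (Fin n) ℝ) (hA₁s : A₁.IsSymm) (hA₂s : A₂.IsSymm)
    (hA₁ : specNorm A₁ ≤ 1) (hA₂ : specNorm A₂ ≤ 1)
    (ε : ℝ) (hε : 0 < ε)
    (x₁ x₂ : Fin n → ℝ) (hx₁ : euclNorm x₁ = 1) (hx₂ : euclNorm x₂ = 1)
    (p₁ p₂ : ℝ) (hp₁ : 0 ≤ p₁) (hp₁₂ : p₁ ≤ p₂) (hp₂ : p₂ ≤ 1)
    (hgap : p₂ - p₁ ≤ ε / 8)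
    (h₁ : 3 * ε / 4 ≤ x₁ ⬝ᵥ (p₁ • A₁ + (1 - p₁) • A₂).mulVec x₁)
    (h₂ : 3 * ε / 4 ≤ x₂ ⬝ᵥ (p₂ • A₁ + (1 - p₂) • A₂).mulVec x₂)
    (hm₁ : x₁ ⬝ᵥ A₁.mulVec x₁ ≤ x₁ ⬝ᵥ A₂.mulVec x₁)
    (hm₂ : x₂ ⬝ᵥ A₂.mulVec x₂ ≤ x₂ ⬝ᵥ A₁.mulVec x₂) :
    ¬ ∃ p ∈ Set.Icc (0 : ℝ) 1,
        x₁ ⬝ᵥ (p • A₁ + (1 - p) • A₂).mulVec x₁ < ε / 2 ∧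
        x₂ ⬝ᵥ (p • A₁ + (1 - p) • A₂).mulVec x₂ < ε / 2 :=
  binary_search_witnesses_certify_general A₁ A₂ hA₁ hA₂ ε x₁ x₂ hx₁ p₁ p₂ hp₁₂ hgap h₁ h₂ hm₁ hm₂
end
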